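/- Var(√(m+n)·(M − A) − √(m+n)·T) → 0 as m, n → ∞ with n/m → λ ∈ (0,∞), where M is the Mann-Whitney statistic, A = P(Y ≥ X), and T is the Hájek projection. Consequently √(m+n)(M − A) and √(m+n)T have the same limiting distribution. -/

import Mathlib

/-!
Write `k(x, y) = 1{x ≤ y}` and `g = k - A - h₁₀ - h₀₁` for the degenerate part of `k` in its
Hoeffding decomposition. Then `√(m+n) (M - A) - √(m+n) T = √(m+n)/(mn) · ∑ᵢⱼ g(Xᵢ, Yⱼ)`, and `g`
integrates to zero in each variable when the other is frozen. By independence, the summands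
`g(Xᵢ, Yⱼ)` are therefore pairwise orthogonal in `L²`: two summands with distinct `Y`-indices
are orthogonal after integrating out those two `Y`'s, and symmetrically for `X`. As `|g| ≤ 4`,
the variance is at most `(m+n)/(mn)² · 16 mn = 16 (1/m + 1/n)`, which tends to `0` since
`n/m → λ > 0` forces `n → ∞`.
-/

open MeasureTheory ProbabilityTheory Finset Filter

lemma integrable_of_abs_le {γ : Type*} [MeasurableSpace γ] {ρ : Measure γ} [IsFiniteMeasure ρ]
    {f : γ → ℝ} (hf : Measurable f) {C : ℝ} (hfC : ∀ x, |f x| ≤ C) : Integrable f ρ :=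
  .of_bound hf.aestronglyMeasurable C (.of_forall hfC)

lemma abs_integral_le_of_abs_le {γ : Type*} [MeasurableSpace γ] {ρ : Measure γ}
    [IsProbabilityMeasure ρ] {f : γ → ℝ} {C : ℝ} (hfC : ∀ x, |f x| ≤ C) : |∫ x, f x ∂ρ| ≤ C := by
  simpa using norm_integral_le_of_norm_le_const (μ := ρ) (f := f) (.of_forall hfC)

section Hoeffding

variable {α β : Type*}

def degeneratePart (k : α × β → ℝ) (A : ℝ) (h₁₀ : α → ℝ) (h₀₁ : β → ℝ) (p : α × β) : ℝ :=
  k p - A - h₁₀ p.1 - h₀₁ p.2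

theorem one_div_mul_sum_degeneratePart (k : α × β → ℝ) (A : ℝ) (h₁₀ : α → ℝ)
    (h₀₁ : β → ℝ) (x : ℕ → α) (y : ℕ → β) {m n : ℕ} (hm : m ≠ 0) (hn : n ≠ 0) :
    1 / (m * n : ℝ) * ∑ p ∈ range m ×ˢ range n, degeneratePart k A h₁₀ h₀₁ (x p.1, y p.2) =
      1 / (m * n : ℝ) * ∑ i ∈ range m, ∑ j ∈ range n, k (x i, y j) - A -
        (1 / (m : ℝ) * ∑ i ∈ range m, h₁₀ (x i) + 1 / (n : ℝ) * ∑ j ∈ range n, h₀₁ (y j)) := by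
  simp only [degeneratePart, sum_product, sum_sub_distrib, sum_const, card_product, card_range,
    nsmul_eq_mul, Nat.cast_mul, ← mul_sum]
  field_simp
  ring

variable [MeasurableSpace α] [MeasurableSpace β] {κ : Measure α} {ν : Measure β}
  [IsProbabilityMeasure κ] [IsProbabilityMeasure ν]
  {k : α × β → ℝ} {A C : ℝ} {h₁₀ : α → ℝ} {h₀₁ : β → ℝ}

theorem integral_degeneratePart_snd_eq_zero (hk : Measurable k) (hkC : ∀ p, |k p| ≤ C)
    (hA : A = ∫ p, k p ∂(κ.prod ν)) (h10 : ∀ x, h₁₀ x = ∫ y, k (x, y) ∂ν - A)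
    (h01 : ∀ y, h₀₁ y = ∫ x, k (x, y) ∂κ - A) (x : α) :
    ∫ y, degeneratePart k A h₁₀ h₀₁ (x, y) ∂ν = 0 := by
  have hk_prod : Integrable k (κ.prod ν) := integrable_of_abs_le hk hkC
  have hk_x : Integrable (fun y => k (x, y)) ν :=
    integrable_of_abs_le (hk.comp measurable_prodMk_left) fun y => hkC _
  have hh01_int : Integrable h₀₁ ν := by
    rw [funext h01]
    exact hk_prod.integral_prod_right.sub (integrable_const A)
  have hh01 : ∫ y, h₀₁ y ∂ν = 0 := by
    rw [funext h01, integral_sub hk_prod.integral_prod_right (integrable_const A),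
      ← integral_prod_symm k hk_prod, ← hA]
    simp
  have hkA : Integrable (fun y => k (x, y) - A) ν := hk_x.sub (integrable_const A)
  have hkAh : Integrable (fun y => k (x, y) - A - h₁₀ x) ν := hkA.sub (integrable_const _)
  simp only [degeneratePart]
  rw [integral_sub hkAh hh01_int, integral_sub hkA (integrable_const _),
    integral_sub hk_x (integrable_const A), hh01, h10 x]
  simp

theorem integral_degeneratePart_fst_eq_zero (hk : Measurable k) (hkC : ∀ p, |k p| ≤ C)
    (hA : A = ∫ p, k p ∂(κ.prod ν)) (h10 : ∀ x, h₁₀ x = ∫ y, k (x, y) ∂ν - A)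
    (h01 : ∀ y, h₀₁ y = ∫ x, k (x, y) ∂κ - A) (y : β) :
    ∫ x, degeneratePart k A h₁₀ h₀₁ (x, y) ∂κ = 0 := by
  have := integral_degeneratePart_snd_eq_zero (k := k ∘ Prod.swap) (κ := ν) (ν := κ)
    (hk.comp measurable_swap) (fun p => hkC _) (by rw [hA]; exact (integral_prod_swap k).symm)
    h01 h10 y
  simpa only [degeneratePart, Function.comp, Prod.swap, sub_right_comm _ (h₀₁ y)] using this

theorem measurable_degeneratePart (hk : Measurable k)
    (h10 : ∀ x, h₁₀ x = ∫ y, k (x, y) ∂ν - A) (h01 : ∀ y, h₀₁ y = ∫ x, k (x, y) ∂κ - A) :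
    Measurable (degeneratePart k A h₁₀ h₀₁) := by
  have hm10 : Measurable h₁₀ := by
    rw [funext h10]
    exact (hk.stronglyMeasurable.integral_prod_right'.measurable).sub_const A
  have hm01 : Measurable h₀₁ := by
    rw [funext h01]
    exact (hk.stronglyMeasurable.integral_prod_left'.measurable).sub_const A
  exact ((hk.sub_const A).sub (hm10.comp measurable_fst)).sub (hm01.comp measurable_snd)

theorem abs_degeneratePart_le (hkC : ∀ p, |k p| ≤ C)
    (hA : A = ∫ p, k p ∂(κ.prod ν)) (h10 : ∀ x, h₁₀ x = ∫ y, k (x, y) ∂ν - A)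
    (h01 : ∀ y, h₀₁ y = ∫ x, k (x, y) ∂κ - A) (p : α × β) :
    |degeneratePart k A h₁₀ h₀₁ p| ≤ 4 * C := by
  have h1 := abs_integral_le_of_abs_le (ρ := ν) (f := fun y => k (p.1, y)) fun y => hkC _
  have h2 := abs_integral_le_of_abs_le (ρ := κ) (f := fun x => k (x, p.2)) fun x => hkC _
  have h3 : |A| ≤ C := hA ▸ abs_integral_le_of_abs_le hkC
  have hg : degeneratePart k A h₁₀ h₀₁ p =
      k p - ∫ y, k (p.1, y) ∂ν - ∫ x, k (x, p.2) ∂κ + A := by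
    simp only [degeneratePart, h10, h01]; ring
  have h0 := abs_le.mp (hkC p)
  rw [abs_le] at h1 h2 h3
  rw [hg, abs_le]
  constructor <;> linarith [h0.1, h0.2, h1.1, h1.2, h2.1, h2.2, h3.1, h3.2]

end Hoeffding

section Independence

variable {Ω α β γ : Type*} [MeasurableSpace Ω] [MeasurableSpace α] [MeasurableSpace β]
  [MeasurableSpace γ] {μ : Measure Ω} [IsProbabilityMeasure μ]

theorem integral_mul_eq_zero_of_indepFun {U : Ω → α} {V : Ω → β} {W : Ω → γ}
    (hU : Measurable U) (hV : Measurable V) (hW : Measurable W)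
    (hUVW : IndepFun U (fun ω => (V ω, W ω)) μ) (hVW : IndepFun V W μ)
    {F : α × β → ℝ} {G : α × γ → ℝ} {C : ℝ} (hF : Measurable F) (hG : Measurable G)
    (hFC : ∀ p, |F p| ≤ C) (hGC : ∀ p, |G p| ≤ C) (hF0 : ∀ x, ∫ y, F (x, y) ∂(μ.map V) = 0) :
    ∫ ω, F (U ω, V ω) * G (U ω, W ω) ∂μ = 0 := by
  have hlaw : μ.map (fun ω => (U ω, (V ω, W ω)))
      = (μ.map U).prod ((μ.map V).prod (μ.map W)) := by
    rw [(indepFun_iff_map_prod_eq_prod_map_map hU.aemeasurable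
      (hV.prodMk hW).aemeasurable).mp hUVW,
      (indepFun_iff_map_prod_eq_prod_map_map hV.aemeasurable hW.aemeasurable).mp hVW]
  set H : α × β × γ → ℝ := fun p => F (p.1, p.2.1) * G (p.1, p.2.2)
  have hH : Measurable H := by fun_prop
  have hH_int : Integrable H ((μ.map U).prod ((μ.map V).prod (μ.map W))) :=
    integrable_of_abs_le (C := C * C) hH fun p => by
      rw [abs_mul]
      exact mul_le_mul (hFC _) (hGC _) (abs_nonneg _) ((abs_nonneg _).trans (hFC (p.1, p.2.1)))
  calc ∫ ω, F (U ω, V ω) * G (U ω, W ω) ∂μ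
      = ∫ p, H p ∂(μ.map (fun ω => (U ω, (V ω, W ω)))) :=
        (integral_map (hU.prodMk (hV.prodMk hW)).aemeasurable
          hH.aestronglyMeasurable).symm
    _ = ∫ x, (∫ y, F (x, y) ∂(μ.map V)) * ∫ z, G (x, z) ∂(μ.map W) ∂(μ.map U) := by
        rw [hlaw, integral_prod _ hH_int]
        congr 1 with x
        exact integral_prod_mul (fun y => F (x, y)) (fun z => G (x, z))
    _ = 0 := by simp [hF0]

end Independence

section TwoSample

variable {Ω α : Type*} [MeasurableSpace Ω] [MeasurableSpace α] {μ : Measure Ω}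
  [IsProbabilityMeasure μ]

theorem integral_mul_comp_eq_zero_of_ne {X Y : ℕ → Ω → α} (hX : ∀ i, Measurable (X i))
    (hY : ∀ j, Measurable (Y j)) (hindep : iIndepFun (Sum.elim X Y) μ)
    (hXid : ∀ i, μ.map (X i) = μ.map (X 0)) (hYid : ∀ j, μ.map (Y j) = μ.map (Y 0))
    {g : α × α → ℝ} {C : ℝ} (hg : Measurable g) (hgC : ∀ p, |g p| ≤ C)
    (hg₁ : ∀ x, ∫ y, g (x, y) ∂(μ.map (Y 0)) = 0) (hg₂ : ∀ y, ∫ x, g (x, y) ∂(μ.map (X 0)) = 0)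
    {p q : ℕ × ℕ} (hpq : p ≠ q) :
    ∫ ω, g (X p.1 ω, Y p.2 ω) * g (X q.1 ω, Y q.2 ω) ∂μ = 0 := by
  have hXY : ∀ k, Measurable (Sum.elim X Y k) := by rintro (i | j); exacts [hX i, hY j]
  by_cases h1 : p.1 = q.1
  · have h2 : p.2 ≠ q.2 := fun h2 => hpq (Prod.ext h1 h2)
    exact integral_mul_eq_zero_of_indepFun (U := fun ω => (X p.1 ω, X q.1 ω))
      ((hX p.1).prodMk (hX q.1)) (hY p.2) (hY q.2)
      (hindep.indepFun_prodMk_prodMk hXY (.inl p.1) (.inl q.1) (.inr p.2) (.inr q.2)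
        (by simp) (by simp) (by simp) (by simp))
      (hindep.indepFun (i := .inr p.2) (j := .inr q.2) (by simpa using h2))
      (F := fun r => g (r.1.1, r.2)) (G := fun r => g (r.1.2, r.2)) (by fun_prop) (by fun_prop)
      (fun _ => hgC _) (fun _ => hgC _) (fun u => by rw [hYid]; exact hg₁ u.1)
  · exact integral_mul_eq_zero_of_indepFun (U := fun ω => (Y p.2 ω, Y q.2 ω))
      ((hY p.2).prodMk (hY q.2)) (hX p.1) (hX q.1)
      (hindep.indepFun_prodMk_prodMk hXY (.inr p.2) (.inr q.2) (.inl p.1) (.inl q.1)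
        (by simp) (by simp) (by simp) (by simp))
      (hindep.indepFun (i := .inl p.1) (j := .inl q.1) (by simpa using h1))
      (F := fun r => g (r.2, r.1.1)) (G := fun r => g (r.2, r.1.2)) (by fun_prop) (by fun_prop)
      (fun _ => hgC _) (fun _ => hgC _) (fun u => by rw [hXid]; exact hg₂ u.1)

end TwoSample

section PairwiseOrthogonal

variable {Ω ι : Type*} [MeasurableSpace Ω] {μ : Measure Ω} {Z : ι → Ω → ℝ}

theorem integral_sq_sum_of_pairwise (s : Finset ι) (hZ : ∀ i ∈ s, MemLp (Z i) 2 μ)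
    (horth : (s : Set ι).Pairwise fun i j => ∫ ω, Z i ω * Z j ω ∂μ = 0) :
    ∫ ω, (∑ i ∈ s, Z i ω) ^ 2 ∂μ = ∑ i ∈ s, ∫ ω, Z i ω ^ 2 ∂μ := by
  have hint : ∀ i ∈ s, ∀ j ∈ s, Integrable (fun ω => Z i ω * Z j ω) μ :=
    fun i hi j hj => (hZ i hi).integrable_mul (hZ j hj)
  calc ∫ ω, (∑ i ∈ s, Z i ω) ^ 2 ∂μ
      = ∑ i ∈ s, ∑ j ∈ s, ∫ ω, Z i ω * Z j ω ∂μ := by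
        simp_rw [sq, sum_mul_sum]
        rw [integral_finsetSum s fun i hi => integrable_finsetSum s fun j hj => hint i hi j hj]
        exact sum_congr rfl fun i hi => integral_finsetSum s fun j hj => hint i hi j hj
    _ = ∑ i ∈ s, ∫ ω, Z i ω * Z i ω ∂μ :=
        sum_congr rfl fun i hi => sum_eq_single_of_mem i hi fun j hj hji => horth hi hj hji.symm
    _ = ∑ i ∈ s, ∫ ω, Z i ω ^ 2 ∂μ := by simp_rw [sq]

theorem variance_sum_le_of_pairwise [IsProbabilityMeasure μ] (s : Finset ι) {C : ℝ}
    (hZ : ∀ i, Measurable (Z i)) (hZC : ∀ i ω, |Z i ω| ≤ C)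
    (horth : (s : Set ι).Pairwise fun i j => ∫ ω, Z i ω * Z j ω ∂μ = 0) :
    variance (fun ω => ∑ i ∈ s, Z i ω) μ ≤ C ^ 2 * #s := by
  have hL2 : ∀ i ∈ s, MemLp (Z i) 2 μ := fun i _ =>
    .of_bound (hZ i).aestronglyMeasurable C (.of_forall (hZC i))
  calc variance (fun ω => ∑ i ∈ s, Z i ω) μ
      ≤ ∫ ω, (∑ i ∈ s, Z i ω) ^ 2 ∂μ :=
        variance_le_expectation_sq (s.measurable_fun_sum fun i _ => hZ i).aestronglyMeasurable
    _ = ∑ i ∈ s, ∫ ω, Z i ω ^ 2 ∂μ := integral_sq_sum_of_pairwise s hL2 horth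
    _ ≤ ∑ _i ∈ s, C ^ 2 := sum_le_sum fun i _ => by
        simpa using integral_mono_of_nonneg (μ := μ) (.of_forall fun ω => sq_nonneg (Z i ω))
          (integrable_const (C ^ 2)) (.of_forall fun ω => sq_le_sq' (abs_le.mp (hZC i ω)).1
            (abs_le.mp (hZC i ω)).2)
    _ = C ^ 2 * #s := by rw [sum_const, nsmul_eq_mul, mul_comm]

end PairwiseOrthogonal

theorem variance_sqrt_mul_mean_le {Ω : Type*} [MeasurableSpace Ω] {μ : Measure Ω}
    [IsProbabilityMeasure μ] {Z : ℕ × ℕ → Ω → ℝ} {C : ℝ} (hZ : ∀ p, Measurable (Z p))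
    (hZC : ∀ p ω, |Z p ω| ≤ C) (horth : Pairwise fun p q => ∫ ω, Z p ω * Z q ω ∂μ = 0)
    {m n : ℕ} (hm : m ≠ 0) (hn : n ≠ 0) :
    variance (fun ω => √(m + n) * (1 / (m * n : ℝ) * ∑ p ∈ range m ×ˢ range n, Z p ω)) μ ≤
      C ^ 2 * (1 / m + 1 / n) := by
  simp_rw [← mul_assoc, ← div_eq_mul_one_div, variance_const_mul]
  calc (√(m + n) / (m * n : ℝ)) ^ 2 * variance (fun ω => ∑ p ∈ range m ×ˢ range n, Z p ω) μ
      ≤ (√(m + n) / (m * n : ℝ)) ^ 2 * (C ^ 2 * #(range m ×ˢ range n)) :=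
        mul_le_mul_of_nonneg_left (variance_sum_le_of_pairwise _ hZ hZC (horth.set_pairwise _))
          (sq_nonneg _)
    _ = C ^ 2 * (1 / m + 1 / n) := by
        rw [card_product, card_range, card_range, Nat.cast_mul, div_pow,
          Real.sq_sqrt (by positivity)]
        field_simp
        ring

theorem tendsto_natCast_atTop_of_tendsto_div {u : ℕ → ℕ} {lam : ℝ} (hlam : 0 < lam)
    (h : Tendsto (fun m => (u m : ℝ) / m) atTop (nhds lam)) :
    Tendsto (fun m => (u m : ℝ)) atTop atTop := by
  refine (h.pos_mul_atTop hlam tendsto_natCast_atTop_atTop).congr' ?_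
  filter_upwards [eventually_ne_atTop 0] with m hm
  field_simp

theorem integral_ite_map {Ω β : Type*} [MeasurableSpace Ω] [MeasurableSpace β] {μ : Measure Ω}
    {Y : Ω → β} (hY : Measurable Y) {P : β → Prop} [DecidablePred P]
    (hP : MeasurableSet {y | P y}) :
    ∫ y, (if P y then (1 : ℝ) else 0) ∂(μ.map Y) = μ.real {ω | P (Y ω)} := by
  rw [show {ω | P (Y ω)} = Y ⁻¹' {y | P y} from rfl, ← map_measureReal_apply hY hP,
    ← integral_indicator_one hP]
  congr 1 with y
  simp [Set.indicator_apply]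

theorem tendsto_variance_sqrt_mul_sub_hajek {Ω α : Type*} [MeasurableSpace Ω]
    [MeasurableSpace α] {μ : Measure Ω} [IsProbabilityMeasure μ] {X Y : ℕ → Ω → α}
    (hX : ∀ i, Measurable (X i)) (hY : ∀ j, Measurable (Y j))
    (hindep : iIndepFun (Sum.elim X Y) μ)
    (hXid : ∀ i, μ.map (X i) = μ.map (X 0)) (hYid : ∀ j, μ.map (Y j) = μ.map (Y 0))
    {k : α × α → ℝ} {C : ℝ} (hk : Measurable k) (hkC : ∀ p, |k p| ≤ C)
    {A : ℝ} (hA : A = ∫ p, k p ∂((μ.map (X 0)).prod (μ.map (Y 0))))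
    {h₁₀ h₀₁ : α → ℝ} (h10 : ∀ x, h₁₀ x = ∫ y, k (x, y) ∂(μ.map (Y 0)) - A)
    (h01 : ∀ y, h₀₁ y = ∫ x, k (x, y) ∂(μ.map (X 0)) - A)
    {M T : ℕ → ℕ → Ω → ℝ}
    (hM : ∀ m n ω, M m n ω = 1 / (m * n : ℝ) * ∑ i ∈ range m, ∑ j ∈ range n, k (X i ω, Y j ω))
    (hT : ∀ m n ω, T m n ω =
      1 / (m : ℝ) * ∑ i ∈ range m, h₁₀ (X i ω) + 1 / (n : ℝ) * ∑ j ∈ range n, h₀₁ (Y j ω))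
    {u : ℕ → ℕ} (hu : Tendsto (fun m => (u m : ℝ)) atTop atTop) :
    Tendsto (fun m => variance
        (fun ω => √(m + u m) * (M m (u m) ω - A) - √(m + u m) * T m (u m) ω) μ)
      atTop (nhds 0) := by
  have := Measure.isProbabilityMeasure_map (μ := μ) (hX 0).aemeasurable
  have := Measure.isProbabilityMeasure_map (μ := μ) (hY 0).aemeasurable
  set g := degeneratePart k A h₁₀ h₀₁
  have hg : Measurable g := measurable_degeneratePart hk h10 h01
  have hgC : ∀ p, |g p| ≤ 4 * C := abs_degeneratePart_le hkC hA h10 h01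
  have horth : Pairwise fun p q : ℕ × ℕ =>
      ∫ ω, g (X p.1 ω, Y p.2 ω) * g (X q.1 ω, Y q.2 ω) ∂μ = 0 := fun p q hpq =>
    integral_mul_comp_eq_zero_of_ne hX hY hindep hXid hYid hg hgC
      (integral_degeneratePart_snd_eq_zero hk hkC hA h10 h01)
      (integral_degeneratePart_fst_eq_zero hk hkC hA h10 h01) hpq
  have hbound : Tendsto (fun m : ℕ => (4 * C) ^ 2 * (1 / (m : ℝ) + 1 / (u m : ℝ)))
      atTop (nhds 0) := by
    simpa using (tendsto_one_div_atTop_nhds_zero_nat.add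
      ((tendsto_const_nhds (x := (1 : ℝ))).div_atTop hu)).const_mul ((4 * C) ^ 2)
  refine squeeze_zero' (.of_forall fun m => variance_nonneg _ μ) ?_ hbound
  filter_upwards [eventually_ne_atTop 0, hu.eventually_gt_atTop 0] with m hm hum_pos
  have hum : u m ≠ 0 := by exact_mod_cast hum_pos.ne'
  convert variance_sqrt_mul_mean_le (Z := fun p ω => g (X p.1 ω, Y p.2 ω))
    (fun p => hg.comp ((hX p.1).prodMk (hY p.2))) (fun p ω => hgC _) horth hm hum using 3 with ω
  rw [one_div_mul_sum_degeneratePart k A h₁₀ h₀₁ (X · ω) (Y · ω) hm hum, hM, hT]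
  ring

theorem stmt_13 {Ω : Type*} [MeasurableSpace Ω] (μ : Measure Ω) [IsProbabilityMeasure μ]
    (X Y : ℕ → Ω → ℝ)
    (hmX : ∀ i, Measurable (X i)) (hmY : ∀ j, Measurable (Y j))
    (hindep : iIndepFun (Sum.elim X Y) μ)
    (hXid : ∀ i, μ.map (X i) = μ.map (X 0))
    (hYid : ∀ j, μ.map (Y j) = μ.map (Y 0))
    (A : ℝ) (hA : A = (μ {ω | X 0 ω ≤ Y 0 ω}).toReal)
    (h₁₀ : ℝ → ℝ) (hh₁₀ : ∀ x, h₁₀ x = (μ {ω | x ≤ Y 0 ω}).toReal - A)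
    (h₀₁ : ℝ → ℝ) (hh₀₁ : ∀ y, h₀₁ y = (μ {ω | X 0 ω ≤ y}).toReal - A)
    (M T : ℕ → ℕ → Ω → ℝ)
    (hM : ∀ m n ω, M m n ω = (1 / (m * n : ℝ)) *
      ∑ i ∈ Finset.range m, ∑ j ∈ Finset.range n,
        (if X i ω ≤ Y j ω then (1 : ℝ) else 0))
    (hT : ∀ m n ω, T m n ω = (1 / (m : ℝ)) * ∑ i ∈ Finset.range m, h₁₀ (X i ω) +
      (1 / (n : ℝ)) * ∑ j ∈ Finset.range n, h₀₁ (Y j ω))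
    (nseq : ℕ → ℕ) (lam : ℝ) (hlam : 0 < lam)
    (hratio : Tendsto (fun m => (nseq m : ℝ) / m) atTop (nhds lam)) :
    Tendsto (fun m => variance
        (fun ω => Real.sqrt (m + nseq m) * (M m (nseq m) ω - A) -
          Real.sqrt (m + nseq m) * T m (nseq m) ω) μ)
      atTop (nhds 0) := by
  set k : ℝ × ℝ → ℝ := fun p => if p.1 ≤ p.2 then 1 else 0
  have hk : Measurable k :=
    .ite (measurableSet_le measurable_fst measurable_snd) measurable_const measurable_const
  have hkC : ∀ p, |k p| ≤ 1 := fun p => by by_cases h : p.1 ≤ p.2 <;> simp [k, h]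
  have hA' : A = ∫ p, k p ∂((μ.map (X 0)).prod (μ.map (Y 0))) := by
    rw [← (indepFun_iff_map_prod_eq_prod_map_map (hmX 0).aemeasurable (hmY 0).aemeasurable).mp
      (hindep.indepFun (i := .inl 0) (j := .inr 0) (by simp)),
      integral_ite_map ((hmX 0).prodMk (hmY 0)) (measurableSet_le measurable_fst measurable_snd),
      hA, measureReal_def]
  have h10 : ∀ x, h₁₀ x = ∫ y, k (x, y) ∂(μ.map (Y 0)) - A := fun x => by
    rw [hh₁₀, integral_ite_map (hmY 0) measurableSet_Ici, measureReal_def]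
  have h01 : ∀ y, h₀₁ y = ∫ x, k (x, y) ∂(μ.map (X 0)) - A := fun y => by
    rw [hh₀₁, integral_ite_map (hmX 0) measurableSet_Iic, measureReal_def]
  exact tendsto_variance_sqrt_mul_sub_hajek hmX hmY hindep hXid hYid hk hkC hA' h10 h01 hM hT
    (tendsto_natCast_atTop_of_tendsto_div hlam hratio)
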